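/- arXiv:1806.05459 — 6 statements merged into one kernel-verified Lean document; each statement's English description precedes it below -/
import Mathlib

section
/- If p ≥ 5 is a prime number, then the binomial coefficient C(2p−1, p−1) is congruent to 1 modulo p³. -/
/-! By Vandermonde, `C(2p, p) = ∑ₖ C(p, k)²`. For `0 < k < p` we have `k C(p, k) = p C(p - 1, k - 1)`
and `C(p - 1, k - 1) ≡ ±1 (mod p)`, so `C(p, k)² ≡ p² / k² (mod p³)`. Since `k ↦ 1 / k` permutes the
nonzero residues, `∑ 1 / k² ≡ ∑_{x ∈ 𝔽_p} x² ≡ 0 (mod p)` as soon as `2 < p - 1`. Hence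
`C(2p, p) ≡ 2 (mod p³)`, and `C(2p, p) = 2 C(2p - 1, p - 1)` with `2` invertible mod `p³`. -/

open Finset

theorem Nat.choose_two_mul_eq_two_mul_choose_sub_one {n : ℕ} (hn : n ≠ 0) :
    (2 * n).choose n = 2 * (2 * n - 1).choose (n - 1) := by
  obtain ⟨m, rfl⟩ := Nat.exists_eq_succ_of_ne_zero hn
  rw [show 2 * (m + 1) = 2 * m + 1 + 1 by ring, Nat.choose_succ_succ', Nat.choose_symm_half]
  simp only [Nat.succ_sub_one]
  ring

theorem FiniteField.sum_inv_pow_lt_card_sub_one (K : Type*) [Field K] [Fintype K] {i : ℕ}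
    (h : i < Fintype.card K - 1) : ∑ x : K, x⁻¹ ^ i = 0 :=
  (Equiv.sum_comp (Equiv.inv K) (· ^ i)).trans (FiniteField.sum_pow_lt_card_sub_one K i h)

theorem ZMod.sum_range_natCast {M : Type*} [AddCommMonoid M] (n : ℕ) [NeZero n]
    (f : ZMod n → M) : ∑ k ∈ range n, f k = ∑ x, f x :=
  Finset.sum_nbij' (fun k => (k : ZMod n)) ZMod.val (fun _ _ => mem_univ _)
    (fun x _ => mem_range.2 x.val_lt) (fun _ hk => ZMod.val_cast_of_lt (mem_range.1 hk))
    (fun x _ => ZMod.natCast_zmod_val x) (fun _ _ => rfl)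

namespace ZMod

variable {p : ℕ} [Fact p.Prime]

theorem natCast_sub_one_choose {k : ℕ} (hk : k < p) :
    ((p - 1).choose k : ZMod p) = (-1) ^ k := by
  induction k with
  | zero => simp
  | succ k ih =>
    have hpascal : (p - 1).choose k + (p - 1).choose (k + 1) = p.choose (k + 1) := by
      rw [← Nat.choose_succ_succ', Nat.sub_add_cancel (Fact.out : p.Prime).one_le]
    have hdvd : (p.choose (k + 1) : ZMod p) = 0 :=
      (natCast_eq_zero_iff _ _).2 ((Fact.out : p.Prime).dvd_choose_self k.succ_ne_zero hk)
    have := congrArg (Nat.cast : ℕ → ZMod p) hpascal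
    push_cast at this
    rw [hdvd, ih (by omega)] at this
    linear_combination this

theorem natCast_choose_div_self_mul {i : ℕ} (hi : i + 1 < p) :
    ((p.choose (i + 1) / p : ℕ) : ZMod p) * (i + 1 : ℕ) = (-1) ^ i := by
  have hp := (Fact.out : p.Prime)
  have hquot : p.choose (i + 1) / p * (i + 1) = (p - 1).choose i := by
    have h := Nat.add_one_mul_choose_eq (p - 1) i
    rw [Nat.sub_add_cancel hp.one_le] at h
    rw [← Nat.mul_div_cancel' (hp.dvd_choose_self i.succ_ne_zero hi), mul_assoc] at h
    exact (Nat.eq_of_mul_eq_mul_left hp.pos h).symm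
  rw [← Nat.cast_mul, hquot, natCast_sub_one_choose (by omega)]

theorem natCast_choose_div_self_sq {i : ℕ} (hi : i + 1 < p) :
    ((p.choose (i + 1) / p : ℕ) : ZMod p) ^ 2 = ((i + 1 : ℕ) : ZMod p)⁻¹ ^ 2 := by
  rw [inv_pow]
  refine eq_inv_of_mul_eq_one_left ?_
  rw [← mul_pow, natCast_choose_div_self_mul hi, ← pow_mul, mul_comm, pow_mul, neg_one_sq, one_pow]

theorem sum_range_inv_natCast_succ_sq (h3 : 3 < p) :
    ∑ i ∈ range (p - 1), ((i + 1 : ℕ) : ZMod p)⁻¹ ^ 2 = 0 := by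
  have hshift := sum_range_succ' (fun k : ℕ => (k : ZMod p)⁻¹ ^ 2) (p - 1)
  rw [Nat.sub_add_cancel (by omega), sum_range_natCast p (fun x => x⁻¹ ^ 2),
    FiniteField.sum_inv_pow_lt_card_sub_one (ZMod p) (by rw [card]; omega)] at hshift
  simpa using hshift.symm

end ZMod

theorem Nat.Prime.choose_two_mul_eq {p : ℕ} (hp : p.Prime) :
    (2 * p).choose p = 2 + p ^ 2 * ∑ i ∈ range (p - 1), (p.choose (i + 1) / p) ^ 2 := by
  have hshift := sum_range_succ' (fun k => p.choose k ^ 2) (p - 1)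
  rw [Nat.sub_add_cancel hp.one_le] at hshift
  have hterm : ∀ i ∈ range (p - 1), p.choose (i + 1) ^ 2 = p ^ 2 * (p.choose (i + 1) / p) ^ 2 :=
    fun i hi => by
      rw [← mul_pow, Nat.mul_div_cancel' (hp.dvd_choose_self i.succ_ne_zero (by simp at hi; omega))]
  rw [← Nat.sum_range_choose_sq, sum_range_succ, hshift, mul_sum, sum_congr rfl hterm]
  simp only [Nat.choose_zero_right, Nat.choose_self]
  ring

theorem Nat.Prime.choose_two_mul_modEq_two {p : ℕ} (hp : p.Prime) (h3 : 3 < p) :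
    (2 * p).choose p ≡ 2 [MOD p ^ 3] := by
  have := Fact.mk hp
  have hdvd : p ∣ ∑ i ∈ range (p - 1), (p.choose (i + 1) / p) ^ 2 := by
    rw [← ZMod.natCast_eq_zero_iff]
    push_cast
    rw [sum_congr rfl fun i hi => ZMod.natCast_choose_div_self_sq (by simp at hi; omega)]
    exact ZMod.sum_range_inv_natCast_succ_sq h3
  obtain ⟨m, hm⟩ := hdvd
  rw [hp.choose_two_mul_eq, hm]
  exact (Nat.modEq_zero_iff_dvd.2 ⟨m, by ring⟩).add_left 2

theorem wolstenholme (p : ℕ) (hp : p.Prime) (h5 : 5 ≤ p) :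
    (2 * p - 1).choose (p - 1) ≡ 1 [MOD p ^ 3] := by
  have h := hp.choose_two_mul_modEq_two (by omega)
  rw [Nat.choose_two_mul_eq_two_mul_choose_sub_one hp.ne_zero] at h
  refine Nat.ModEq.cancel_left_of_coprime (c := 2) ?_ h
  exact Nat.Coprime.pow_left 3 ((Nat.coprime_primes hp Nat.prime_two).2 (by omega))
end

section
/- Let p be an odd prime and let m be a positive integer such that p^a < m < p^{a+1} < 2m for some integer a ≥ 0. Then for every positive integer b, the integer n = m·p^b satisfies C(2n−1, n−1) ≢ 1 (mod n). -/
/-!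
With `n = m p^b` and `e = a + 1 + b` we have `n < p^e ≤ 2n`, so adding `n + n` in base `p`
carries out of digit `e - 1`; by Kummer's theorem `p` divides `C(2n, n) = 2 w_n`, hence `w_n`
since `p` is odd. As `p ∣ n`, the congruence `w_n ≡ 1 (mod n)` would give `p ∣ 1`.
-/

namespace Nat

theorem Prime.dvd_choose_add_of_lt_pow {p i j k : ℕ} (hp : p.Prime)
    (hi : i < p ^ k) (hj : j < p ^ k) (hij : p ^ k ≤ i + j) : p ∣ (i + j).choose i := by
  have hk : k ≠ 0 := by rintro rfl; rw [pow_zero] at hi hj hij; omega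
  have hlog : k ≤ log p (j + i) := le_log_of_pow_le hp.one_lt (by omega)
  have hcarry : k ∈ {l ∈ Finset.Ico 1 (log p (j + i) + 1) | p ^ l ≤ i % p ^ l + j % p ^ l} := by
    rw [Finset.mem_filter, Finset.mem_Ico, mod_eq_of_lt hi, mod_eq_of_lt hj]
    exact ⟨⟨by omega, by omega⟩, hij⟩
  have hmult : (1 : ℕ∞) ≤ emultiplicity p ((j + i).choose i) := by
    rw [hp.emultiplicity_choose' (lt_succ_self _)]
    exact_mod_cast Finset.card_pos.mpr ⟨k, hcarry⟩
  simpa [add_comm j i] using pow_dvd_of_le_emultiplicity hmult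

theorem Prime.dvd_centralBinom_of_lt_pow {p n k : ℕ} (hp : p.Prime)
    (hn : n < p ^ k) (hk : p ^ k ≤ 2 * n) : p ∣ n.centralBinom := by
  rw [two_mul] at hk
  rw [centralBinom_eq_two_mul_choose, two_mul]
  exact hp.dvd_choose_add_of_lt_pow hn hn hk

theorem centralBinom_eq_two_mul_choose_pred {n : ℕ} (hn : 0 < n) :
    n.centralBinom = 2 * (2 * n - 1).choose (n - 1) := by
  obtain ⟨k, rfl⟩ : ∃ k, n = k + 1 := ⟨n - 1, by omega⟩
  rw [show 2 * (k + 1) - 1 = k + 1 + k by omega, Nat.add_sub_cancel, centralBinom_eq_two_mul_choose,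
    two_mul, ← add_assoc, choose_succ_succ' (k + 1 + k) k, choose_symm_add, ← two_mul]

theorem Prime.dvd_choose_pred_of_lt_pow {p n k : ℕ} (hp : p.Prime) (hodd : Odd p)
    (hn : n < p ^ k) (hk : p ^ k ≤ 2 * n) : p ∣ (2 * n - 1).choose (n - 1) := by
  have hcentral := hp.dvd_centralBinom_of_lt_pow hn hk
  rw [centralBinom_eq_two_mul_choose_pred (by omega)] at hcentral
  exact hodd.coprime_two_right.dvd_of_dvd_mul_left hcentral

end Nat

theorem jones_holds_for_mpb_general (p : ℕ) (hp : p.Prime) (hodd : Odd p)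
    (m : ℕ) (a : ℕ)
    (h2 : m < p ^ (a + 1)) (h3 : p ^ (a + 1) < 2 * m)
    (b : ℕ) (hb : 0 < b) :
    ¬ (2 * (m * p ^ b) - 1).choose (m * p ^ b - 1) ≡ 1 [MOD m * p ^ b] := by
  intro hmod
  have hpb : 0 < p ^ b := pow_pos hp.pos b
  have hlt : m * p ^ b < p ^ (a + 1 + b) := by
    rw [pow_add]
    exact Nat.mul_lt_mul_of_pos_right h2 hpb
  have hle : p ^ (a + 1 + b) ≤ 2 * (m * p ^ b) := by
    rw [pow_add, ← mul_assoc]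
    exact Nat.mul_le_mul_right _ h3.le
  have hpw := hp.dvd_choose_pred_of_lt_pow hodd hlt hle
  have hpn : p ∣ m * p ^ b := dvd_mul_of_dvd_right (dvd_pow_self p hb.ne') m
  exact hp.one_lt.ne' (Nat.dvd_one.mp ((hmod.dvd_iff hpn).mp hpw))

theorem jones_holds_for_mpb (p : ℕ) (hp : p.Prime) (hodd : Odd p)
    (m : ℕ) (hm : 0 < m) (a : ℕ)
    (h1 : p ^ a < m) (h2 : m < p ^ (a + 1)) (h3 : p ^ (a + 1) < 2 * m)
    (b : ℕ) (hb : 0 < b) :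
    ¬ (2 * (m * p ^ b) - 1).choose (m * p ^ b - 1) ≡ 1 [MOD m * p ^ b] :=
  jones_holds_for_mpb_general p hp hodd m a h2 h3 b hb
end

section
/- Let p be an odd prime and let m be a positive integer such that p^a < m < p^{a+1} < 2m for some integer a ≥ 0. Then p divides C(2m, m). -/
theorem p_dvd_central_binom (p : ℕ) (hp : p.Prime) (hodd : Odd p)
    (m : ℕ) (hm : 0 < m) (a : ℕ)
    (h1 : p ^ a < m) (h2 : m < p ^ (a + 1)) (h3 : p ^ (a + 1) < 2 * m) :
    p ∣ (2 * m).choose m := by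
  rw [← emultiplicity_ne_zero]
  have hkn : m ≤ 2 * m := by omega
  have hb : Nat.log p (2 * m) < Nat.log p (2 * m) + 1 := Nat.lt_succ_self _
  rw [Nat.Prime.emultiplicity_choose hp hkn hb]
  have hmem : a + 1 ∈ Finset.filter
      (fun i => p ^ i ≤ m % p ^ i + (2 * m - m) % p ^ i)
      (Finset.Ico 1 (Nat.log p (2 * m) + 1)) := by
    have hmod : m % p ^ (a + 1) = m := Nat.mod_eq_of_lt h2
    have hle : a + 1 ≤ Nat.log p (2 * m) :=
      Nat.le_log_of_pow_le hp.one_lt h3.le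
    simp only [Finset.mem_filter, Finset.mem_Ico]
    refine ⟨⟨by omega, by omega⟩, ?_⟩
    have : 2 * m - m = m := by omega
    rw [this, hmod]
    omega
  intro h
  rw [Nat.cast_eq_zero, Finset.card_eq_zero] at h
  rw [h] at hmem
  exact absurd hmem (Finset.notMem_empty _)
end

section
/- Let p be an odd prime and let m be a positive integer such that p^a < m < p^{a+1} < 2m for some integer a ≥ 0. Then for every positive integer b, setting n = m·p^b, the prime p divides C(2n−1, n−1), and hence C(2n−1, n−1) ≢ 1 (mod p). -/
/-! Writing `n = m * p ^ b`, we have `n < p ^ (a + 1 + b) < 2 * n`, so adding `n - 1` and `n` in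
base `p` carries into the digit of `p ^ (a + 1 + b)`, and Kummer's theorem gives
`p ∣ (2 * n - 1).choose (n - 1)`. -/

open Finset in
theorem Nat.Prime.dvd_choose_add_of_lt_pow_s3 {p a b i : ℕ} (hp : p.Prime) (ha : a < p ^ i)
    (hb : b < p ^ i) (hab : p ^ i ≤ a + b) : p ∣ (a + b).choose b := by
  have hi : i ∈ Ico 1 (Nat.log p (a + b) + 1) := by
    refine mem_Ico.2 ⟨Nat.one_le_iff_ne_zero.2 ?_, Nat.lt_succ_of_le ?_⟩
    · rintro rfl
      rw [pow_zero] at ha hb hab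
      omega
    · exact Nat.le_log_of_pow_le hp.one_lt hab
  have hcarry : i ∈ {j ∈ Ico 1 (Nat.log p (a + b) + 1) | p ^ j ≤ b % p ^ j + a % p ^ j} := by
    rw [mem_filter, Nat.mod_eq_of_lt ha, Nat.mod_eq_of_lt hb]
    exact ⟨hi, by omega⟩
  have hmult : (1 : ℕ∞) ≤ emultiplicity p ((a + b).choose b) := by
    rw [hp.emultiplicity_choose' (Nat.lt_succ_self _)]
    exact_mod_cast Finset.card_pos.2 ⟨i, hcarry⟩
  simpa using pow_dvd_of_le_emultiplicity hmult

theorem Nat.Prime.dvd_choose_two_mul_sub_one_of_lt_pow {p n k : ℕ} (hp : p.Prime)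
    (hn : n < p ^ k) (hk : p ^ k < 2 * n) : p ∣ (2 * n - 1).choose (n - 1) := by
  have h := hp.dvd_choose_add_of_lt_pow_s3 (a := n) (b := n - 1) hn (by omega) (by omega)
  rwa [show n + (n - 1) = 2 * n - 1 by omega] at h

theorem p_dvd_w_n_general (p : ℕ) (hp : p.Prime)
    (m : ℕ) (a : ℕ)
    (h2 : m < p ^ (a + 1)) (h3 : p ^ (a + 1) < 2 * m)
    (b : ℕ) :
    p ∣ (2 * (m * p ^ b) - 1).choose (m * p ^ b - 1) ∧
      ¬ (2 * (m * p ^ b) - 1).choose (m * p ^ b - 1) ≡ 1 [MOD p] := by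
  have hpb : 0 < p ^ b := pow_pos hp.pos b
  have hdvd : p ∣ (2 * (m * p ^ b) - 1).choose (m * p ^ b - 1) := by
    refine hp.dvd_choose_two_mul_sub_one_of_lt_pow (k := a + 1 + b) ?_ ?_
    · rw [pow_add]
      exact Nat.mul_lt_mul_of_pos_right h2 hpb
    · rw [pow_add, ← mul_assoc]
      exact Nat.mul_lt_mul_of_pos_right h3 hpb
  refine ⟨hdvd, fun hmod => hp.not_dvd_one ?_⟩
  have hzero_one : 0 ≡ 1 [MOD p] := (Nat.modEq_zero_iff_dvd.2 hdvd).symm.trans hmod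
  simpa using (Nat.modEq_iff_dvd' (Nat.zero_le 1)).1 hzero_one

theorem p_dvd_w_n (p : ℕ) (hp : p.Prime) (hodd : Odd p)
    (m : ℕ) (hm : 0 < m) (a : ℕ)
    (h1 : p ^ a < m) (h2 : m < p ^ (a + 1)) (h3 : p ^ (a + 1) < 2 * m)
    (b : ℕ) (hb : 0 < b) :
    p ∣ (2 * (m * p ^ b) - 1).choose (m * p ^ b - 1) ∧
      ¬ (2 * (m * p ^ b) - 1).choose (m * p ^ b - 1) ≡ 1 [MOD p] :=
  p_dvd_w_n_general p hp m a h2 h3 b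
end

section
/- Let p be an odd prime and let m be a positive integer with m < p < 2m. Then for every positive integer k, the integer n = m·p^k satisfies C(2n−1, n−1) ≢ 1 (mod n). -/
theorem helou_terjanian (p : ℕ) (hp : p.Prime) (hodd : Odd p)
    (m : ℕ) (hm : 0 < m) (h1 : m < p) (h2 : p < 2 * m)
    (k : ℕ) (hk : 0 < k) :
    ¬ (2 * (m * p ^ k) - 1).choose (m * p ^ k - 1) ≡ 1 [MOD m * p ^ k] := by
  haveI : Fact p.Prime := ⟨hp⟩
  set q := p ^ k with hqdef
  have hq : 0 < q := pow_pos hp.pos k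
  have hmq : 1 ≤ m * q := Nat.one_le_iff_ne_zero.mpr (by positivity)
  have hmq2 : 1 ≤ 2 * (m * q) := by omega
  have e1 : 2 * (m * q) - 1 = (q - 1) + (2 * m - 1) * q := by
    have h2m : 1 ≤ 2 * m := by omega
    zify [hq, h2m, hmq, hmq2]
    ring
  have e2 : m * q - 1 = (q - 1) + (m - 1) * q := by
    zify [hq, hm, hmq]
    ring
  have d1 : (2 * (m * q) - 1) / q = 2 * m - 1 := by
    rw [e1, Nat.add_mul_div_right _ _ hq, Nat.div_eq_of_lt (by omega)]; omega
  have d2 : (m * q - 1) / q = m - 1 := by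
    rw [e2, Nat.add_mul_div_right _ _ hq, Nat.div_eq_of_lt (by omega)]; omega
  have hdvd_small : p ∣ (2 * m - 1).choose (m - 1) :=
    hp.dvd_choose (by omega) (by omega) (by omega)
  have hl := Choose.choose_modEq_choose_mul_prod_range_choose
    (n := 2 * (m * q) - 1) (k := m * q - 1) (p := p) k
  rw [hqdef] at d1 d2
  rw [d1, d2] at hl
  have hb : (p : ℤ) ∣ ((2 * m - 1).choose (m - 1) : ℤ) *
      (∏ i ∈ Finset.range k,
        ((2 * (m * q) - 1) / p ^ i % p).choose ((m * q - 1) / p ^ i % p) : ℕ) :=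
    Dvd.dvd.mul_right (Int.natCast_dvd_natCast.mpr hdvd_small) _
  have hdvdZ : (p : ℤ) ∣ ((2 * (m * q) - 1).choose (m * q - 1) : ℤ) := by
    have := hb.sub hl.dvd
    simpa using this
  have hdvd : p ∣ (2 * (m * q) - 1).choose (m * q - 1) := Int.natCast_dvd_natCast.mp hdvdZ
  intro h
  have hpn : p ∣ m * q := Dvd.dvd.mul_left (dvd_pow_self p hk.ne') m
  have h' : (2 * (m * q) - 1).choose (m * q - 1) ≡ 1 [MOD p] := h.of_dvd hpn
  have h0 : (2 * (m * q) - 1).choose (m * q - 1) ≡ 0 [MOD p] :=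
    (Nat.modEq_zero_iff_dvd).mpr hdvd
  have : (0 : ℕ) ≡ 1 [MOD p] := h0.symm.trans h'
  have hp1 : p ∣ 1 := (Nat.modEq_iff_dvd' (by omega)).mp this
  have := Nat.le_of_dvd one_pos hp1
  have := hp.two_le
  omega
end

section
/- Let q < p be consecutive primes with q ≠ 2. Then n = p·q satisfies C(2n−1, n−1) ≢ 1 (mod n). -/
open Nat Finset

theorem consecutive_primes (p q : ℕ) (hq : q.Prime) (hp : p.Prime)
    (hlt : q < p) (hcons : ∀ r : ℕ, q < r → r < p → ¬ r.Prime)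
    (hq2 : q ≠ 2) :
    ¬ (2 * (p * q) - 1).choose (p * q - 1) ≡ 1 [MOD p * q] := by
  -- q ≥ 3, p ≥ 5-ish
  have hq3 : 3 ≤ q := by
    rcases hq.two_le.lt_or_eq with h | h
    · omega
    · omega
  have hp2 : 2 ≤ p := hp.two_le
  -- Bertrand: p < 2q
  have hp2q : p < 2 * q := by
    obtain ⟨r, hr, hqr, hr2q⟩ := Nat.exists_prime_lt_and_le_two_mul q (by omega)
    have hpr : p ≤ r := by
      by_contra h
      exact hcons r hqr (by omega) hr
    rcases lt_or_eq_of_le (hpr.trans hr2q) with h | h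
    · exact h
    · exfalso
      have := hp.eq_one_or_self_of_dvd 2 ⟨q, h⟩
      omega
  have hqp : q < p := hlt
  have hn1 : 1 ≤ p * q := le_trans (by norm_num) (Nat.mul_le_mul hp2 hq.two_le)
  -- key: p divides the binomial coefficient, via Kummer
  have hkn : p * q - 1 ≤ 2 * (p * q) - 1 := by omega
  have hsub : 2 * (p * q) - 1 - (p * q - 1) = p * q := by omega
  have hlog : Nat.log p (2 * (p * q) - 1) < 3 := by
    apply Nat.log_lt_of_lt_pow (by omega)
    have ha : 2 * q ≤ p * p := by nlinarith
    have h3 : 2 * (p * q) ≤ p ^ 3 := by nlinarith [Nat.mul_le_mul (le_refl p) ha]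
    omega
  have hmul := Nat.Prime.emultiplicity_choose hp hkn hlog
  have hmem : 2 ∈ {i ∈ Ico 1 3 | p ^ i ≤ (p * q - 1) % p ^ i + (2 * (p * q) - 1 - (p * q - 1)) % p ^ i} := by
    rw [Finset.mem_filter]
    constructor
    · simp
    · rw [hsub]
      have h1 : p * q < p ^ 2 := by nlinarith
      have h2 : (p * q - 1) % p ^ 2 = p * q - 1 := Nat.mod_eq_of_lt (by omega)
      have h3 : (p * q) % p ^ 2 = p * q := Nat.mod_eq_of_lt h1
      rw [h2, h3]
      have h4 : p ^ 2 + 1 ≤ 2 * (p * q) := by nlinarith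
      omega
  have hpos : 0 < emultiplicity p ((2 * (p * q) - 1).choose (p * q - 1)) := by
    rw [hmul]
    have : 0 < #{i ∈ Ico 1 3 | p ^ i ≤ (p * q - 1) % p ^ i + (2 * (p * q) - 1 - (p * q - 1)) % p ^ i} :=
      Finset.card_pos.mpr ⟨2, hmem⟩
    exact_mod_cast this
  have hdvd : p ∣ (2 * (p * q) - 1).choose (p * q - 1) := dvd_of_emultiplicity_pos hpos
  intro h
  have hmodp : (2 * (p * q) - 1).choose (p * q - 1) ≡ 1 [MOD p] :=
    h.of_dvd ⟨q, rfl⟩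
  have h0 : (2 * (p * q) - 1).choose (p * q - 1) ≡ 0 [MOD p] :=
    (Nat.modEq_zero_iff_dvd).mpr hdvd
  have h10 : (1 : ℕ) ≡ 0 [MOD p] := hmodp.symm.trans h0
  have : p ∣ 1 := (Nat.modEq_zero_iff_dvd).mp h10
  have := Nat.le_of_dvd one_pos this
  omega
end
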